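/- arXiv:2107.00840 — 2 statements merged into one kernel-verified Lean document; each statement's English description precedes it below -/
import Mathlib

section
/- Let δ ≥ 0 and let Γ denote the Gamma function on the right half-plane. Then for all real τ, 1/|Γ(δ+1+iτ)| ≤ e^(C(δ)|τ|²)/Γ(δ+1), where C(δ) = max{(1+δ)^(-2), (1+δ)^(-1)}. -/
/-! Euler's limit formula writes `Γ(x) / Γ(x + iτ)` as a limit of products of
`(x + j + iτ) / (x + j)`. Each factor has modulus `√(1 + τ²/(x+j)²) ≤ exp(τ²/(2(x+j)²))`,
and `∑ⱼ (x+j)⁻² ≤ x⁻² + x⁻¹` by comparison with a telescoping sum. -/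

open Real Complex Finset
open scoped Nat

lemma inv_sq_add_one_le_inv_sub_inv {a : ℝ} (ha : 0 < a) :
    ((a + 1) ^ 2)⁻¹ ≤ a⁻¹ - (a + 1)⁻¹ := by
  have hsub : a⁻¹ - (a + 1)⁻¹ = (a * (a + 1))⁻¹ := by
    field_simp
    ring
  rw [hsub]
  exact inv_anti₀ (by positivity) (by nlinarith)

lemma sum_range_inv_sq_add_le {x : ℝ} (hx : 0 < x) (n : ℕ) :
    ∑ j ∈ range n, ((x + j) ^ 2)⁻¹ ≤ (x ^ 2)⁻¹ + x⁻¹ := by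
  cases n with
  | zero => simp only [range_zero, sum_empty]; positivity
  | succ n =>
    have htail : 0 ≤ (x + n)⁻¹ := by positivity
    calc ∑ j ∈ range (n + 1), ((x + j) ^ 2)⁻¹
        = ∑ j ∈ range n, ((x + j + 1) ^ 2)⁻¹ + (x ^ 2)⁻¹ := by
          rw [sum_range_succ']
          push_cast
          simp only [add_assoc, add_zero]
      _ ≤ ∑ j ∈ range n, ((x + j)⁻¹ - (x + (j + 1 : ℕ))⁻¹) + (x ^ 2)⁻¹ := by
          gcongr with j
          push_cast
          rw [← add_assoc]
          exact inv_sq_add_one_le_inv_sub_inv (by positivity)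
      _ = x⁻¹ - (x + n)⁻¹ + (x ^ 2)⁻¹ := by
          rw [sum_range_sub' (fun j : ℕ ↦ (x + j)⁻¹)]
          simp
      _ ≤ (x ^ 2)⁻¹ + x⁻¹ := by linarith

lemma norm_ofReal_add_mul_I_le {a : ℝ} (ha : 0 < a) (τ : ℝ) :
    ‖(a : ℂ) + τ * I‖ ≤ Real.exp (τ ^ 2 / (2 * a ^ 2)) * a := by
  rw [norm_add_mul_I, sqrt_le_iff]
  refine ⟨by positivity, ?_⟩
  calc a ^ 2 + τ ^ 2 = (τ ^ 2 / a ^ 2 + 1) * a ^ 2 := by field_simp; ring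
    _ ≤ Real.exp (τ ^ 2 / a ^ 2) * a ^ 2 := by gcongr; exact add_one_le_exp _
    _ = (Real.exp (τ ^ 2 / (2 * a ^ 2)) * a) ^ 2 := by
        rw [mul_pow, ← Real.exp_nat_mul]
        ring_nf

lemma prod_range_norm_ofReal_add_mul_I_add_le {x : ℝ} (hx : 0 < x) (τ : ℝ) (n : ℕ) :
    ∏ j ∈ range n, ‖(x : ℂ) + τ * I + j‖ ≤
      Real.exp (((x ^ 2)⁻¹ + x⁻¹) / 2 * τ ^ 2) * ∏ j ∈ range n, (x + j) := by
  calc ∏ j ∈ range n, ‖(x : ℂ) + τ * I + j‖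
      ≤ ∏ j ∈ range n, Real.exp (τ ^ 2 / (2 * (x + j) ^ 2)) * (x + j) := by
        gcongr with j
        have hj : (x : ℂ) + τ * I + j = ((x + j : ℝ) : ℂ) + τ * I := by push_cast; ring
        rw [hj]
        exact norm_ofReal_add_mul_I_le (by positivity) τ
    _ = Real.exp (τ ^ 2 / 2 * ∑ j ∈ range n, ((x + j) ^ 2)⁻¹) * ∏ j ∈ range n, (x + j) := by
        rw [prod_mul_distrib, ← Real.exp_sum, mul_sum]
        congr 2
        refine sum_congr rfl fun j _ ↦ ?_
        field_simp
    _ ≤ Real.exp (((x ^ 2)⁻¹ + x⁻¹) / 2 * τ ^ 2) * ∏ j ∈ range n, (x + j) := by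
        gcongr Real.exp ?_ * _
        have := sum_range_inv_sq_add_le hx n
        nlinarith [sq_nonneg τ]

lemma Complex.norm_GammaSeq_of_ne_zero (z : ℂ) {n : ℕ} (hn : n ≠ 0) :
    ‖Complex.GammaSeq z n‖ = (n : ℝ) ^ z.re * n ! / ∏ j ∈ range (n + 1), ‖z + j‖ := by
  rw [Complex.GammaSeq, norm_div, norm_mul, norm_prod, norm_natCast_cpow_of_pos (by omega)]
  simp

lemma Real.GammaSeq_le_exp_mul_norm_GammaSeq {x : ℝ} (hx : 0 < x) (τ : ℝ) {n : ℕ} (hn : n ≠ 0) :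
    Real.GammaSeq x n ≤
      Real.exp (((x ^ 2)⁻¹ + x⁻¹) / 2 * τ ^ 2) * ‖Complex.GammaSeq (x + τ * I) n‖ := by
  have hP : 0 < ∏ j ∈ range (n + 1), (x + j) := prod_pos fun j _ ↦ by positivity
  have hQ : 0 < ∏ j ∈ range (n + 1), ‖(x : ℂ) + τ * I + j‖ := prod_pos fun j _ ↦
    lt_of_lt_of_le (by simpa using (by positivity : 0 < x + j)) (re_le_norm _)
  rw [Real.GammaSeq, Complex.norm_GammaSeq_of_ne_zero _ hn, mul_div_assoc', div_le_div_iff₀ hP hQ]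
  have hre : ((x : ℂ) + τ * I).re = x := by simp
  rw [hre]
  calc (n : ℝ) ^ x * n ! * ∏ j ∈ range (n + 1), ‖(x : ℂ) + τ * I + j‖
      ≤ (n : ℝ) ^ x * n ! * (Real.exp (((x ^ 2)⁻¹ + x⁻¹) / 2 * τ ^ 2) *
          ∏ j ∈ range (n + 1), (x + j)) := by
        gcongr
        exact prod_range_norm_ofReal_add_mul_I_add_le hx τ (n + 1)
    _ = _ := by ring

lemma Real.Gamma_le_exp_mul_norm_Gamma {x : ℝ} (hx : 0 < x) (τ : ℝ) :
    Real.Gamma x ≤ Real.exp (((x ^ 2)⁻¹ + x⁻¹) / 2 * τ ^ 2) * ‖Complex.Gamma (x + τ * I)‖ :=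
  le_of_tendsto_of_tendsto (Real.GammaSeq_tendsto_Gamma x)
    (((Complex.GammaSeq_tendsto_Gamma _).norm).const_mul _)
    (Filter.eventually_ne_atTop 0 |>.mono fun _ hn ↦
      Real.GammaSeq_le_exp_mul_norm_GammaSeq hx τ hn)

/-- Lower bound for the Gamma function along vertical lines:
`1/|Γ(δ+1+iτ)| ≤ e^(C(δ)|τ|²)/Γ(δ+1)` with `C(δ) = max{(1+δ)^(-2), (1+δ)^(-1)}`. -/
theorem stmt_8 (δ : ℝ) (hδ : 0 ≤ δ) (τ : ℝ) :
    1 / ‖Complex.Gamma ((δ : ℂ) + 1 + (τ : ℂ) * Complex.I)‖ ≤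
      Real.exp (max ((1 + δ) ^ (-2 : ℤ)) ((1 + δ)⁻¹) * τ ^ 2) / Real.Gamma (δ + 1) := by
  have hx : 0 < δ + 1 := by linarith
  have hz : (δ : ℂ) + 1 + τ * I = ((δ + 1 : ℝ) : ℂ) + τ * I := by push_cast; ring
  have hC : (((δ + 1) ^ 2)⁻¹ + (δ + 1)⁻¹) / 2 ≤ max ((1 + δ) ^ (-2 : ℤ)) ((1 + δ)⁻¹) := by
    rw [zpow_neg, add_comm 1 δ]
    norm_cast
    linarith [le_max_left (((δ + 1) ^ 2)⁻¹) (δ + 1)⁻¹, le_max_right (((δ + 1) ^ 2)⁻¹) (δ + 1)⁻¹]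
  have hΓ : 0 < ‖Complex.Gamma ((δ : ℂ) + 1 + τ * I)‖ :=
    norm_pos_iff.2 (Complex.Gamma_ne_zero_of_re_pos (by simpa using hx))
  rw [div_le_div_iff₀ hΓ (Real.Gamma_pos_of_pos hx), one_mul, hz]
  calc Real.Gamma (δ + 1)
      ≤ Real.exp ((((δ + 1) ^ 2)⁻¹ + (δ + 1)⁻¹) / 2 * τ ^ 2) *
          ‖Complex.Gamma (((δ + 1 : ℝ) : ℂ) + τ * I)‖ := Real.Gamma_le_exp_mul_norm_Gamma hx τ
    _ ≤ _ := by gcongr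
end

section
/- Let 0 < δ < 1/2. There exists a constant c ≠ 0 (depending on δ) such that ∫₀¹ e^{2πiR\lambda} R^(-δ) dR = c λ^(δ-1) + O(λ^(-1)) as λ → +∞. -/
open Real MeasureTheory Filter Asymptotics Set intervalIntegral Interval Topology

noncomputable section

namespace Stmt15Aux

def c2 : ℂ := 2 * (Real.pi : ℂ) * Complex.I

lemma c2_eq (u : ℝ) : c2 * u = ((2 * Real.pi * u : ℝ) : ℂ) * Complex.I := by
  unfold c2; push_cast; ring

lemma c2_ne : c2 ≠ 0 := by
  unfold c2
  simp [Real.pi_ne_zero, Complex.I_ne_zero, Complex.ofReal_ne_zero]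

lemma norm_c2 : ‖c2‖ = 2 * Real.pi := by
  unfold c2
  rw [norm_mul, norm_mul]
  simp [abs_of_pos Real.pi_pos]

lemma norm_exp_c2 (u : ℝ) : ‖Complex.exp (c2 * u)‖ = 1 := by
  rw [c2_eq]; exact Complex.norm_exp_ofReal_mul_I _

def f (δ : ℝ) (u : ℝ) : ℂ := Complex.exp (c2 * u) * ((u ^ (-δ) : ℝ) : ℂ)

def g (δ : ℝ) (u : ℝ) : ℂ := Complex.exp (c2 * u) * ((u ^ (-δ - 1) : ℝ) : ℂ)

lemma norm_f (δ : ℝ) {u : ℝ} (hu : 0 ≤ u) : ‖f δ u‖ = u ^ (-δ) := by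
  unfold f
  rw [norm_mul, norm_exp_c2, one_mul, Complex.norm_real, Real.norm_eq_abs,
    abs_of_nonneg (Real.rpow_nonneg hu _)]

lemma norm_g (δ : ℝ) {u : ℝ} (hu : 0 ≤ u) : ‖g δ u‖ = u ^ (-δ - 1) := by
  unfold g
  rw [norm_mul, norm_exp_c2, one_mul, Complex.norm_real, Real.norm_eq_abs,
    abs_of_nonneg (Real.rpow_nonneg hu _)]

lemma cont_exp : Continuous fun u : ℝ => Complex.exp (c2 * u) := by fun_prop

lemma intInt_f {δ : ℝ} (hδ1 : δ < 1) (a b : ℝ) : IntervalIntegrable (f δ) volume a b := by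
  have h : IntervalIntegrable (fun x : ℝ => ((x ^ (-δ) : ℝ) : ℂ)) volume a b := by
    have h0 := intervalIntegral.intervalIntegrable_rpow' (r := -δ) (by linarith) (a := a) (b := b)
    exact ⟨h0.1.ofReal, h0.2.ofReal⟩
  exact h.continuousOn_mul cont_exp.continuousOn

lemma contOn_g (δ : ℝ) {s : Set ℝ} (hs : ∀ x ∈ s, x ≠ 0) : ContinuousOn (g δ) s := by
  apply cont_exp.continuousOn.mul
  exact Complex.continuous_ofReal.comp_continuousOn (continuousOn_id.rpow_const fun x hx => Or.inl (hs x hx))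

lemma int_g_Ioi {δ : ℝ} (hδ0 : 0 < δ) {a : ℝ} (ha : 0 < a) : IntegrableOn (g δ) (Ioi a) := by
  have h : IntegrableOn (fun x : ℝ => x ^ (-δ - 1)) (Ioi a) :=
    integrableOn_Ioi_rpow_of_lt (by linarith) ha
  refine Integrable.mono' h ?_ ?_
  · exact ((contOn_g δ fun x hx => ne_of_gt (ha.trans hx)).aestronglyMeasurable measurableSet_Ioi)
  · filter_upwards [ae_restrict_mem measurableSet_Ioi] with x hx
    rw [norm_g δ (le_of_lt (ha.trans hx))]

lemma tail_bound {δ : ℝ} (hδ0 : 0 < δ) {lam : ℝ} (hl : 0 < lam) :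
    ‖∫ u in Ioi lam, g δ u‖ ≤ lam ^ (-δ) / δ := by
  have h1 : ‖∫ u in Ioi lam, g δ u‖ ≤ ∫ u in Ioi lam, ‖g δ u‖ := norm_integral_le_integral_norm _
  have h2 : ∫ u in Ioi lam, ‖g δ u‖ = ∫ u in Ioi lam, u ^ (-δ - 1) := by
    refine setIntegral_congr_fun measurableSet_Ioi fun x hx => ?_
    exact norm_g δ (le_of_lt (hl.trans hx))
  have h3 : ∫ u in Ioi lam, u ^ (-δ - 1) = -lam ^ (-δ - 1 + 1) / (-δ - 1 + 1) :=
    integral_Ioi_rpow_of_lt (by linarith) hl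
  rw [h2, h3] at h1
  have : -lam ^ (-δ - 1 + 1) / (-δ - 1 + 1) = lam ^ (-δ) / δ := by
    rw [show -δ - 1 + 1 = -δ by ring, neg_div_neg_eq]
  linarith [this ▸ h1]

lemma hasDerivAt_expc2 (x : ℝ) :
    HasDerivAt (fun y : ℝ => Complex.exp (c2 * y)) (c2 * Complex.exp (c2 * x)) x := by
  have h0 : HasDerivAt (fun z : ℂ => Complex.exp (c2 * z)) (Complex.exp (c2 * x) * (c2 * 1)) (x : ℂ) :=
    (Complex.hasDerivAt_exp (c2 * x)).comp (x : ℂ) ((hasDerivAt_id (x : ℂ)).const_mul c2)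
  have h : HasDerivAt (fun z : ℂ => Complex.exp (c2 * z)) (c2 * Complex.exp (c2 * x)) (x : ℂ) := by
    convert h0 using 1; ring
  exact h.comp_ofReal

lemma ibp {δ : ℝ} (hδ0 : 0 < δ) (hδ1 : δ < 1) {lam : ℝ} (hl : 1 ≤ lam) :
    ∫ u in (1:ℝ)..lam, f δ u
      = (((lam ^ (-δ) : ℝ) : ℂ) * Complex.exp (c2 * lam) - 1) / c2
        + (δ / c2) * ∫ u in (1:ℝ)..lam, g δ u := by
  have huIcc : [[(1:ℝ), lam]] = Icc 1 lam := uIcc_of_le hl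
  have hu : ∀ x ∈ [[(1:ℝ), lam]],
      HasDerivAt (fun y : ℝ => ((y ^ (-δ) : ℝ) : ℂ)) (((-δ * x ^ (-δ - 1) : ℝ) : ℂ)) x := by
    intro x hx
    rw [huIcc] at hx
    have hx0 : x ≠ 0 := by have := hx.1; positivity
    exact (Real.hasDerivAt_rpow_const (Or.inl hx0)).ofReal_comp
  have hv : ∀ x ∈ [[(1:ℝ), lam]],
      HasDerivAt (fun y : ℝ => Complex.exp (c2 * y) / c2) (Complex.exp (c2 * x)) x := by
    intro x hx
    have := (hasDerivAt_expc2 x).div_const c2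
    simpa [mul_div_assoc, mul_div_cancel_left₀ _ c2_ne] using this
  have hu' : IntervalIntegrable (fun x : ℝ => ((-δ * x ^ (-δ - 1) : ℝ) : ℂ)) volume 1 lam := by
    apply ContinuousOn.intervalIntegrable
    rw [huIcc]
    refine Complex.continuous_ofReal.comp_continuousOn (ContinuousOn.mul continuousOn_const ?_)
    exact continuousOn_id.rpow_const fun x hx => Or.inl (by have := hx.1; positivity)
  have hv' : IntervalIntegrable (fun x : ℝ => Complex.exp (c2 * x)) volume 1 lam :=
    cont_exp.intervalIntegrable _ _
  have key := intervalIntegral.integral_mul_deriv_eq_deriv_mul hu hv hu' hv'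
  have hf_eq : ∫ u in (1:ℝ)..lam, f δ u
      = ∫ x in (1:ℝ)..lam, ((x ^ (-δ) : ℝ) : ℂ) * Complex.exp (c2 * x) := by
    apply intervalIntegral.integral_congr
    intro x _; unfold f; ring
  have hg_eq : ∫ x in (1:ℝ)..lam, ((-δ * x ^ (-δ - 1) : ℝ) : ℂ) * (Complex.exp (c2 * x) / c2)
      = (-δ / c2) * ∫ u in (1:ℝ)..lam, g δ u := by
    rw [← intervalIntegral.integral_const_mul]
    apply intervalIntegral.integral_congr
    intro x _; unfold g; push_cast; field_simp
  rw [hf_eq, key, hg_eq]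
  have h1 : ((1:ℝ) ^ (-δ) : ℝ) = 1 := Real.one_rpow _
  rw [h1]
  have hexp1 : Complex.exp (c2 * (1:ℝ)) = 1 := by
    rw [Complex.ofReal_one, mul_one]; exact Complex.exp_two_pi_mul_I
  rw [hexp1]
  push_cast
  field_simp
  ring

def T (δ : ℝ) : ℂ := ∫ u in Ioi (1:ℝ), g δ u

def F (δ : ℝ) (lam : ℝ) : ℂ := ∫ u in (0:ℝ)..lam, f δ u

def cconst (δ : ℝ) : ℂ := F δ 1 - 1 / c2 + (δ / c2) * T δ

lemma tail_split {δ : ℝ} (hδ0 : 0 < δ) {lam : ℝ} (hl : 1 ≤ lam) :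
    ∫ u in (1:ℝ)..lam, g δ u = T δ - ∫ u in Ioi lam, g δ u := by
  have h1 : IntegrableOn (g δ) (Ioc 1 lam) :=
    (int_g_Ioi hδ0 one_pos).mono_set Ioc_subset_Ioi_self
  have h2 : IntegrableOn (g δ) (Ioi lam) :=
    (int_g_Ioi hδ0 one_pos).mono_set (Ioi_subset_Ioi hl)
  have hunion : Ioc (1:ℝ) lam ∪ Ioi lam = Ioi 1 := Ioc_union_Ioi_eq_Ioi hl
  have hdisj : Disjoint (Ioc (1:ℝ) lam) (Ioi lam) := by
    simp [Set.disjoint_left]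
  have := setIntegral_union hdisj measurableSet_Ioi h1 h2
  rw [hunion] at this
  rw [intervalIntegral.integral_of_le hl]
  unfold T
  rw [this]; ring

lemma F_sub_bound {δ : ℝ} (hδ0 : 0 < δ) (hδ1 : δ < 1) {lam : ℝ} (hl : 1 ≤ lam) :
    ‖F δ lam - cconst δ‖ ≤ lam ^ (-δ) := by
  have hl0 : (0:ℝ) < lam := lt_of_lt_of_le one_pos hl
  have hsplit : F δ lam = F δ 1 + ∫ u in (1:ℝ)..lam, f δ u := by
    unfold F
    exact (intervalIntegral.integral_add_adjacent_intervals (intInt_f hδ1 0 1)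
      (intInt_f hδ1 1 lam)).symm
  have heq : F δ lam - cconst δ
      = ((lam ^ (-δ) : ℝ) : ℂ) * Complex.exp (c2 * lam) / c2
        - (δ / c2) * ∫ u in Ioi lam, g δ u := by
    rw [hsplit, ibp hδ0 hδ1 hl, tail_split hδ0 hl]
    unfold cconst
    ring
  rw [heq]
  have hb1 : ‖((lam ^ (-δ) : ℝ) : ℂ) * Complex.exp (c2 * lam) / c2‖ = lam ^ (-δ) / (2 * π) := by
    rw [norm_div, norm_mul, norm_exp_c2, norm_c2, mul_one, Complex.norm_real, Real.norm_eq_abs,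
      abs_of_nonneg (Real.rpow_nonneg hl0.le _)]
  have hb2 : ‖(↑δ / c2) * ∫ u in Ioi lam, g δ u‖ ≤ lam ^ (-δ) / (2 * π) := by
    rw [norm_mul, norm_div, norm_c2, Complex.norm_real, Real.norm_eq_abs, abs_of_pos hδ0]
    have := tail_bound hδ0 hl0
    calc δ / (2 * π) * ‖∫ u in Ioi lam, g δ u‖ ≤ δ / (2 * π) * (lam ^ (-δ) / δ) := by
          apply mul_le_mul_of_nonneg_left this
          positivity
      _ = lam ^ (-δ) / (2 * π) := by field_simp
  calc ‖((lam ^ (-δ) : ℝ) : ℂ) * Complex.exp (c2 * lam) / c2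
        - (↑δ / c2) * ∫ u in Ioi lam, g δ u‖
      ≤ ‖((lam ^ (-δ) : ℝ) : ℂ) * Complex.exp (c2 * lam) / c2‖
        + ‖(↑δ / c2) * ∫ u in Ioi lam, g δ u‖ := norm_sub_le _ _
    _ ≤ lam ^ (-δ) / (2 * π) + lam ^ (-δ) / (2 * π) := by rw [hb1]; linarith
    _ ≤ lam ^ (-δ) := by
        have hπ : (1:ℝ) ≤ π := by linarith [Real.pi_gt_three]
        have h0 : (0:ℝ) ≤ lam ^ (-δ) := Real.rpow_nonneg hl0.le _
        rw [← add_div]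
        rw [div_le_iff₀ (by positivity)]
        nlinarith

lemma cov {δ : ℝ} {lam : ℝ} (hl : 0 < lam) :
    (∫ R in Set.Ioc (0:ℝ) 1,
        Complex.exp (2 * (Real.pi : ℂ) * Complex.I * (R : ℂ) * (lam : ℂ)) * ((R ^ (-δ) : ℝ) : ℂ))
      = ((lam ^ (δ - 1) : ℝ) : ℂ) * F δ lam := by
  have hpt : ∀ R ∈ Set.Ioc (0:ℝ) 1,
      Complex.exp (2 * (Real.pi : ℂ) * Complex.I * (R : ℂ) * (lam : ℂ)) * ((R ^ (-δ) : ℝ) : ℂ)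
        = ((lam ^ δ : ℝ) : ℂ) * f δ (lam * R) := by
    intro R hR
    unfold f
    have h1 : ((lam * R : ℝ) ^ (-δ) : ℝ) = lam ^ (-δ) * R ^ (-δ) :=
      Real.mul_rpow hl.le hR.1.le
    have h2 : c2 * ((lam * R : ℝ) : ℂ) = 2 * (Real.pi : ℂ) * Complex.I * (R : ℂ) * (lam : ℂ) := by
      unfold c2; push_cast; ring
    rw [h2, h1]
    have h3 : (lam ^ δ : ℝ) * (lam ^ (-δ) : ℝ) = 1 := by
      rw [← Real.rpow_add hl]; simp
    push_cast
    calc Complex.exp (2 * (Real.pi : ℂ) * Complex.I * (R : ℂ) * (lam : ℂ)) * ((R ^ (-δ) : ℝ) : ℂ)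
        = (((lam ^ δ : ℝ) * (lam ^ (-δ) : ℝ) : ℝ) : ℂ) *
          (Complex.exp (2 * (Real.pi : ℂ) * Complex.I * (R : ℂ) * (lam : ℂ)) * ((R ^ (-δ) : ℝ) : ℂ)) := by
          rw [h3]; push_cast; ring
      _ = _ := by push_cast; ring
  rw [setIntegral_congr_fun measurableSet_Ioc hpt]
  rw [← intervalIntegral.integral_of_le zero_le_one]
  rw [intervalIntegral.integral_const_mul]
  have hcomp := intervalIntegral.integral_comp_mul_left (f δ) (ne_of_gt hl) (a := 0) (b := 1)
  rw [hcomp]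
  rw [mul_zero, mul_one]
  have : ((lam ^ (δ - 1) : ℝ) : ℂ) = ((lam ^ δ : ℝ) : ℂ) * (lam : ℂ)⁻¹ := by
    rw [show δ - 1 = δ + (-1) by ring, Real.rpow_add hl, Real.rpow_neg_one]
    push_cast
    ring
  rw [this]
  unfold F
  rw [Complex.real_smul]
  push_cast
  ring

def h (δ : ℝ) (u : ℝ) : ℝ := Real.sin (2 * π * u) * u ^ (-δ)

lemma im_f (δ : ℝ) (u : ℝ) : (f δ u).im = h δ u := by
  unfold f h
  rw [c2_eq, Complex.exp_mul_I]
  generalize 2 * π * u = t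
  simp [Complex.mul_im, Complex.add_re, Complex.add_im, Complex.mul_I_re, Complex.mul_I_im,
    Complex.cos_ofReal_im, Complex.sin_ofReal_re, Complex.cos_ofReal_re, Complex.sin_ofReal_im]

lemma intInt_h {δ : ℝ} (hδ1 : δ < 1) (a b : ℝ) : IntervalIntegrable (h δ) volume a b := by
  have h0 := intervalIntegral.intervalIntegrable_rpow' (r := -δ) (by linarith) (a := a) (b := b)
  exact h0.continuousOn_mul (Continuous.continuousOn (by fun_prop))

lemma im_F {δ : ℝ} (hδ1 : δ < 1) {lam : ℝ} (hl : 0 ≤ lam) :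
    (F δ lam).im = ∫ u in (0:ℝ)..lam, h δ u := by
  unfold F
  rw [intervalIntegral.integral_of_le hl, intervalIntegral.integral_of_le hl]
  have him := _root_.integral_im (μ := volume.restrict (Ioc (0:ℝ) lam)) ((intInt_f hδ1 0 lam).1)
  simp only [RCLike.im_to_complex] at him
  rw [← him]
  apply setIntegral_congr_fun measurableSet_Ioc
  intro x _
  exact im_f δ x

lemma half_split {δ : ℝ} (hδ1 : δ < 1) (n : ℕ) :
    ∫ u in (n:ℝ)..(n+1:ℝ), h δ u
      = ∫ u in (n:ℝ)..(n+1/2:ℝ), (h δ u + h δ (u + 1/2)) := by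
  have hint : ∀ a b : ℝ, IntervalIntegrable (fun u => h δ (u + 1/2)) volume a b := by
    intro a b
    have h3 := (intInt_h hδ1 (a + 1/2) (b + 1/2)).comp_add_right (1/2)
    simpa using h3
  have h1 : ∫ u in (n:ℝ)..(n+1:ℝ), h δ u
      = (∫ u in (n:ℝ)..(n+1/2:ℝ), h δ u) + ∫ u in (n+1/2:ℝ)..(n+1:ℝ), h δ u :=
    (intervalIntegral.integral_add_adjacent_intervals (intInt_h hδ1 _ _) (intInt_h hδ1 _ _)).symm
  have h2 : ∫ u in (n+1/2:ℝ)..(n+1:ℝ), h δ u = ∫ u in (n:ℝ)..(n+1/2:ℝ), h δ (u + 1/2) := by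
    rw [intervalIntegral.integral_comp_add_right (h δ)]
    congr 1 <;> ring
  rw [h1, h2, ← intervalIntegral.integral_add (intInt_h hδ1 _ _) (hint _ _)]

lemma h_pair (δ : ℝ) (u : ℝ) :
    h δ u + h δ (u + 1/2) = Real.sin (2 * π * u) * (u ^ (-δ) - (u + 1/2) ^ (-δ)) := by
  unfold h
  have : 2 * π * (u + 1/2) = 2 * π * u + π := by ring
  rw [this, Real.sin_add_pi]
  ring

lemma sin_nonneg_shift {u : ℝ} (n : ℕ) (h1 : (n:ℝ) ≤ u) (h2 : u ≤ (n:ℝ) + 1/2) :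
    0 ≤ Real.sin (2 * π * u) := by
  have : 2 * π * u = 2 * π * (u - n) + (n : ℤ) * (2 * π) := by push_cast; ring
  rw [this, Real.sin_add_int_mul_two_pi]
  apply Real.sin_nonneg_of_nonneg_of_le_pi
  · have : (0:ℝ) ≤ u - n := by linarith
    positivity
  · nlinarith [Real.pi_pos]

lemma pair_nonneg {δ : ℝ} (hδ0 : 0 < δ) {u : ℝ} (n : ℕ) (h1 : (n:ℝ) ≤ u) (h2 : u ≤ (n:ℝ) + 1/2) :
    0 ≤ Real.sin (2 * π * u) * (u ^ (-δ) - (u + 1/2) ^ (-δ)) := by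
  rcases eq_or_lt_of_le (le_trans (Nat.cast_nonneg n) h1) with h0 | h0
  · rw [← h0]
    simp
  · apply mul_nonneg (sin_nonneg_shift n h1 h2)
    have := Real.rpow_le_rpow_of_nonpos h0 (by linarith : u ≤ u + 1/2) (by linarith : -δ ≤ 0)
    linarith

lemma step_nonneg {δ : ℝ} (hδ0 : 0 < δ) (hδ1 : δ < 1) (n : ℕ) :
    0 ≤ ∫ u in (n:ℝ)..(n+1:ℝ), h δ u := by
  rw [half_split hδ1 n]
  have heq : ∀ u ∈ Set.Icc (n:ℝ) ((n:ℝ)+1/2), 0 ≤ h δ u + h δ (u + 1/2) := by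
    intro u hu
    rw [h_pair]
    exact pair_nonneg hδ0 n hu.1 hu.2
  exact intervalIntegral.integral_nonneg (by norm_num) heq

lemma base_pos {δ : ℝ} (hδ0 : 0 < δ) (hδ1 : δ < 1) :
    0 < ∫ u in (0:ℝ)..(1:ℝ), h δ u := by
  have hs := half_split hδ1 0
  have hs' : ∫ u in (0:ℝ)..(1:ℝ), h δ u
      = ∫ u in (0:ℝ)..(1/2:ℝ), (h δ u + h δ (u + 1/2)) := by
    convert hs using 2 <;> norm_num
  rw [hs']
  have hint : IntervalIntegrable (fun u => h δ (u + 1/2)) volume 0 (1/2) := by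
    have h3 := (intInt_h hδ1 (0 + 1/2 : ℝ) (1/2 + 1/2 : ℝ)).comp_add_right (1/2)
    simpa using h3
  apply intervalIntegral.intervalIntegral_pos_of_pos_on
  · exact (intInt_h hδ1 0 (1/2:ℝ)).add hint
  · intro x hx
    rw [h_pair]
    apply mul_pos
    · apply Real.sin_pos_of_pos_of_lt_pi
      · have := hx.1; positivity
      · have h2 := hx.2
        nlinarith [Real.pi_pos]
    · have := Real.rpow_lt_rpow_of_neg hx.1 (by linarith [hx.1] : x < x + 1/2) (by linarith : -δ < 0)
      linarith
  · norm_num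

lemma S_ge {δ : ℝ} (hδ0 : 0 < δ) (hδ1 : δ < 1) (n : ℕ) :
    (∫ u in (0:ℝ)..(1:ℝ), h δ u) ≤ ∫ u in (0:ℝ)..((n+1:ℕ):ℝ), h δ u := by
  induction n with
  | zero => norm_num
  | succ m ih =>
    have hc : ((m+1+1:ℕ):ℝ) = ((m+1:ℕ):ℝ) + 1 := by push_cast; ring
    have hadj : ∫ u in (0:ℝ)..(((m+1:ℕ):ℝ) + 1), h δ u
        = (∫ u in (0:ℝ)..((m+1:ℕ):ℝ), h δ u)
          + ∫ u in ((m+1:ℕ):ℝ)..(((m+1:ℕ):ℝ) + 1), h δ u :=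
      (intervalIntegral.integral_add_adjacent_intervals (intInt_h hδ1 _ _)
        (intInt_h hδ1 _ _)).symm
    rw [hc, hadj]
    have := step_nonneg hδ0 hδ1 (m+1)
    linarith

lemma tendsto_F {δ : ℝ} (hδ0 : 0 < δ) (hδ1 : δ < 1) :
    Tendsto (fun n : ℕ => F δ n) atTop (𝓝 (cconst δ)) := by
  rw [tendsto_iff_norm_sub_tendsto_zero]
  apply squeeze_zero' (g := fun n : ℕ => (n:ℝ) ^ (-δ))
      (Eventually.of_forall fun n => norm_nonneg _)
  · filter_upwards [eventually_ge_atTop 1] with n hn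
    exact F_sub_bound hδ0 hδ1 (by exact_mod_cast hn)
  · exact (tendsto_rpow_neg_atTop hδ0).comp tendsto_natCast_atTop_atTop

lemma cconst_ne {δ : ℝ} (hδ0 : 0 < δ) (hδ1 : δ < 1) : cconst δ ≠ 0 := by
  have him : Tendsto (fun n : ℕ => (F δ n).im) atTop (𝓝 (cconst δ).im) :=
    (Complex.continuous_im.tendsto _).comp (tendsto_F hδ0 hδ1)
  have hlower : (∫ u in (0:ℝ)..(1:ℝ), h δ u) ≤ (cconst δ).im := by
    apply ge_of_tendsto him
    filter_upwards [eventually_ge_atTop 1] with n hn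
    rw [im_F hδ1 (by positivity : (0:ℝ) ≤ (n:ℝ))]
    obtain ⟨m, rfl⟩ : ∃ m, n = m + 1 := ⟨n - 1, by omega⟩
    exact S_ge hδ0 hδ1 m
  have hpos := base_pos hδ0 hδ1
  intro hc
  rw [hc] at hlower
  simp at hlower
  linarith

end Stmt15Aux

end

open Stmt15Aux in
/-- Asymptotics of the oscillatory integral: there is a nonzero constant `c` (depending on
`δ`) such that `∫₀¹ e^{2πiRλ} R^(-δ) dR = c λ^(δ-1) + O(λ^(-1))` as `λ → +∞`. -/
theorem stmt_15 (δ : ℝ) (hδ0 : 0 < δ) (hδ : δ < 1 / 2) :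
    ∃ c : ℂ, c ≠ 0 ∧
      (fun lam : ℝ =>
          (∫ R in Set.Ioc (0 : ℝ) 1,
            Complex.exp (2 * (Real.pi : ℂ) * Complex.I * (R : ℂ) * (lam : ℂ)) *
              ((R ^ (-δ) : ℝ) : ℂ)) - c * ((lam ^ (δ - 1) : ℝ) : ℂ)) =O[atTop]
        fun lam : ℝ => lam⁻¹ := by
  have hδ1 : δ < 1 := by linarith
  refine ⟨cconst δ, cconst_ne hδ0 hδ1, ?_⟩
  rw [isBigO_iff]
  refine ⟨1, ?_⟩
  filter_upwards [eventually_ge_atTop (1:ℝ)] with lam hl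
  have hl0 : (0:ℝ) < lam := lt_of_lt_of_le one_pos hl
  rw [cov hl0]
  have hfac : ((lam ^ (δ-1) : ℝ) : ℂ) * F δ lam - cconst δ * ((lam ^ (δ-1) : ℝ) : ℂ)
      = ((lam ^ (δ-1) : ℝ) : ℂ) * (F δ lam - cconst δ) := by ring
  rw [hfac, norm_mul, Complex.norm_real, Real.norm_eq_abs,
    abs_of_nonneg (Real.rpow_nonneg hl0.le _)]
  calc lam ^ (δ-1) * ‖F δ lam - cconst δ‖
      ≤ lam ^ (δ-1) * lam ^ (-δ) :=
        mul_le_mul_of_nonneg_left (F_sub_bound hδ0 hδ1 hl) (Real.rpow_nonneg hl0.le _)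
    _ = lam ^ (-1 : ℝ) := by rw [← Real.rpow_add hl0]; congr 1; ring
    _ = ‖lam⁻¹‖ := by
        rw [Real.rpow_neg_one, Real.norm_eq_abs, abs_of_nonneg (inv_nonneg.mpr hl0.le)]
    _ ≤ 1 * ‖lam⁻¹‖ := by rw [one_mul]
end
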